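/- Let C be a real constant, Q(x,y,t) = (x²+y²)³ + 3(x⁴+y⁴) + 18x²y² + 9(x²+y²) + 9(C−t)² + (6x³ − 18xy² − 18x)(C−t), and U(x,y,t) = −3((x²+y²+3)(x²−y²) − 6x(C−t))/Q(x,y,t). Then for every t ≠ C, the function (x,y) ↦ U(x,y,t)² is integrable on ℝ² and ∫_{ℝ²} U(x,y,t)² dx dy = 3π. -/

import Mathlib

/-- The denominator polynomial `Q(x,y,t)` depending on the real constant `C`. -/
def Q (C x y t : ℝ) : ℝ :=
  (x^2 + y^2)^3 + 3*(x^4 + y^4) + 18*x^2*y^2 + 9*(x^2 + y^2)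
    + 9*(C - t)^2 + (6*x^3 - 18*x*y^2 - 18*x)*(C - t)

/-- The potential `U(x,y,t)` of the mNV solution. -/
noncomputable def U (C x y t : ℝ) : ℝ :=
  -(3 * ((x^2 + y^2 + 3) * (x^2 - y^2) - 6*x*(C - t))) / Q C x y t

open MeasureTheory Real

open Filter Set Topology intervalIntegral


def Qp (s x y : ℝ) : ℝ :=
  (x^2 + y^2)^3 + 3*(x^4 + y^4) + 18*x^2*y^2 + 9*(x^2 + y^2)
    + 9*s^2 + (6*x^3 - 18*x*y^2 - 18*x)*s
def Px (s x y : ℝ) : ℝ := 6*x*(x^2+y^2)^2 + 12*x^3 + 36*x*y^2 + 18*x + (18*x^2-18*y^2-18)*s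
def Py (s x y : ℝ) : ℝ := 6*y*(x^2+y^2)^2 + 12*y^3 + 36*x^2*y + 18*y - 36*x*y*s

lemma sabs (s : ℝ) : |s| ≤ 1 + s^2 := by
  nlinarith [sq_nonneg (|s| - 1), sq_abs s, abs_nonneg s]

section bounds

variable {s x y r : ℝ}

lemma rfacts (hr : r = Real.sqrt (x^2+y^2)) (h1 : 1 ≤ r) :
    r^2 = x^2 + y^2 ∧ |x| ≤ r ∧ |y| ≤ r := by
  have hr2 : r^2 = x^2 + y^2 := by rw [hr]; exact Real.sq_sqrt (by positivity)
  refine ⟨hr2, ?_, ?_⟩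
  · rw [hr, ← Real.sqrt_sq_eq_abs]; exact Real.sqrt_le_sqrt (by nlinarith [sq_nonneg y])
  · rw [hr, ← Real.sqrt_sq_eq_abs]; exact Real.sqrt_le_sqrt (by nlinarith [sq_nonneg x])

lemma Gbound_core (hr : r = Real.sqrt (x^2+y^2)) (h1 : 1 ≤ r)
    (A B : ℝ) (hA : |A| ≤ 210*(1+s^2)*r^4) (hB : |B| ≤ 252*r^4) (z : ℝ) (hz : |z| ≤ r) :
    |z * A + s * B| ≤ 462*(1+s^2)*r^5 := by
  have hr0 : 0 ≤ r := le_trans zero_le_one h1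
  have hK : |s| ≤ 1 + s^2 := sabs s
  have hK0 : (0:ℝ) ≤ 1 + s^2 := by positivity
  have e1 : |z| * |A| ≤ r * (210*(1+s^2)*r^4) := mul_le_mul hz hA (abs_nonneg _) hr0
  have e2 : |s| * |B| ≤ (1+s^2) * (252*r^4) := mul_le_mul hK hB (abs_nonneg _) hK0
  have hr45 : r^4 ≤ r^5 := pow_le_pow_right₀ h1 (by norm_num)
  have h3 : (1+s^2) * (252*r^4) ≤ (1+s^2) * (252*r^5) := by
    apply mul_le_mul_of_nonneg_left (by linarith) hK0
  calc |z * A + s * B| ≤ |z * A| + |s * B| := abs_add_le _ _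
    _ = |z| * |A| + |s| * |B| := by rw [abs_mul, abs_mul]
    _ ≤ r * (210*(1+s^2)*r^4) + (1+s^2) * (252*r^5) := by linarith
    _ ≤ 462*(1+s^2)*r^5 := by nlinarith [mul_le_mul_of_nonneg_left hr45 (mul_nonneg hK0 hr0)]

lemma Abound (hr : r = Real.sqrt (x^2+y^2)) (h1 : 1 ≤ r) :
    |(-(6*x^4) - 60*x^2*y^2 + 18*y^4 - 36*x^2 - 36*y^2 - 54*s^2 : ℝ)| ≤ 210*(1+s^2)*r^4 := by
  obtain ⟨hr2, hxr, hyr⟩ := rfacts hr h1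
  have hx2 : x^2 ≤ r^2 := by nlinarith [sq_nonneg y]
  have hy2 : y^2 ≤ r^2 := by nlinarith [sq_nonneg x]
  have hr20 : (0:ℝ) ≤ r^2 := sq_nonneg r
  have hx4 : x^4 ≤ r^4 := by nlinarith
  have hy4 : y^4 ≤ r^4 := by nlinarith
  have hxy4 : x^2*y^2 ≤ r^4 := by nlinarith
  have hr41 : (1:ℝ) ≤ r^4 := one_le_pow₀ h1
  have hr24 : r^2 ≤ r^4 := by nlinarith
  have hs2 : s^2 ≤ (1+s^2)*r^4 := by nlinarith [sq_nonneg s]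
  have hKr4 : r^4 ≤ (1+s^2)*r^4 := by nlinarith [sq_nonneg s]
  have hxy0 : (0:ℝ) ≤ x^2*y^2 := by positivity
  rw [abs_le]; constructor
  · nlinarith [sq_nonneg s]
  · nlinarith [sq_nonneg s]

lemma Qp_lower (hr : r = Real.sqrt (x^2+y^2)) (hbig : 84*(1+s^2) ≤ r) :
    (1/2)*r^6 ≤ Qp s x y := by
  have hK1 : (1:ℝ) ≤ 1 + s^2 := by nlinarith [sq_nonneg s]
  have h1 : (1:ℝ) ≤ r := le_trans (by nlinarith) hbig
  have hr0 : 0 ≤ r := le_trans zero_le_one h1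
  obtain ⟨hr2, hxr, hyr⟩ := rfacts hr h1
  have hK : |s| ≤ 1 + s^2 := sabs s
  have hx2 : x^2 ≤ r^2 := by nlinarith [sq_nonneg y]
  have hy2 : y^2 ≤ r^2 := by nlinarith [sq_nonneg x]
  have hcross : |6*s*(x^3 - 3*x*y^2 - 3*x)| ≤ 36*(1+s^2)*r^3 := by
    have h2 : |x^3 - 3*x*y^2 - 3*x| ≤ r * (x^2 + 3*y^2 + 3) := by
      rw [show x^3 - 3*x*y^2 - 3*x = x*(x^2 - 3*y^2 - 3) by ring, abs_mul]
      have : |x^2 - 3*y^2 - 3| ≤ x^2 + 3*y^2 + 3 := by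
        rw [abs_le]; constructor <;> nlinarith [sq_nonneg x, sq_nonneg y]
      exact mul_le_mul hxr this (abs_nonneg _) hr0
    have h3 : r * (x^2 + 3*y^2 + 3) ≤ 6*r^3 := by nlinarith [sq_nonneg (r^2-1)]
    calc |6*s*(x^3 - 3*x*y^2 - 3*x)| = 6 * |s| * |x^3 - 3*x*y^2 - 3*x| := by
          rw [abs_mul, abs_mul, abs_of_nonneg (by norm_num : (0:ℝ) ≤ 6)]
      _ ≤ 6 * (1+s^2) * (6*r^3) := by
          apply mul_le_mul (by linarith [mul_le_mul_of_nonneg_left hK (by norm_num : (0:ℝ) ≤ 6)])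
            (le_trans h2 h3) (abs_nonneg _) (by positivity)
      _ = 36*(1+s^2)*r^3 := by ring
  have habs := (abs_le.mp hcross).1
  have hQform : (x^2+y^2)^3 + 6*s*(x^3-3*x*y^2-3*x) ≤ Qp s x y := by
    unfold Qp; nlinarith [sq_nonneg (x^2), sq_nonneg (y^2), sq_nonneg (x*y), sq_nonneg s,
      sq_nonneg x, sq_nonneg y]
  have hr6 : (x^2+y^2)^3 = r^6 := by rw [← hr2]; ring
  have hr13 : r ≤ r^3 := by nlinarith [mul_nonneg (mul_nonneg hr0 (sub_nonneg.2 h1)) (add_nonneg hr0 zero_le_one)]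
  have hr3 : 72*(1+s^2) ≤ r^3 := by linarith
  nlinarith [mul_nonneg (sub_nonneg.2 hr3) (pow_nonneg hr0 3)]

lemma G1bound (hr : r = Real.sqrt (x^2+y^2)) (h1 : 1 ≤ r) :
    |Px s x y * (x^2+y^2) - 6*x*Qp s x y| ≤ 462*(1+s^2)*r^5 := by
  obtain ⟨hr2, hxr, hyr⟩ := rfacts hr h1
  have hx2 : x^2 ≤ r^2 := by nlinarith [sq_nonneg y]
  have hy2 : y^2 ≤ r^2 := by nlinarith [sq_nonneg x]
  have hr20 : (0:ℝ) ≤ r^2 := sq_nonneg r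
  have hx4 : x^4 ≤ r^4 := by nlinarith
  have hy4 : y^4 ≤ r^4 := by nlinarith
  have hxy4 : x^2*y^2 ≤ r^4 := by nlinarith
  have hr41 : (1:ℝ) ≤ r^4 := one_le_pow₀ h1
  have hr24 : r^2 ≤ r^4 := by nlinarith
  have hxy0 : (0:ℝ) ≤ x^2*y^2 := by positivity
  have hid : Px s x y * (x^2+y^2) - 6*x*Qp s x y
      = x * (-(6*x^4) - 60*x^2*y^2 + 18*y^4 - 36*x^2 - 36*y^2 - 54*s^2)
        + s * (-(18*y^2) - 18*y^4 + 90*x^2 + 108*x^2*y^2 - 18*x^4) := by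
    unfold Px Qp; ring
  rw [hid]
  refine Gbound_core hr h1 _ _ (Abound hr h1) ?_ x hxr
  rw [abs_le]; constructor <;> nlinarith

lemma G2bound (hr : r = Real.sqrt (x^2+y^2)) (h1 : 1 ≤ r) :
    |Py s x y * (x^2+y^2) - 6*y*Qp s x y| ≤ 462*(1+s^2)*r^5 := by
  obtain ⟨hr2, hxr, hyr⟩ := rfacts hr h1
  have hx2 : x^2 ≤ r^2 := by nlinarith [sq_nonneg y]
  have hy2 : y^2 ≤ r^2 := by nlinarith [sq_nonneg x]
  have hr20 : (0:ℝ) ≤ r^2 := sq_nonneg r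
  have hx4 : x^4 ≤ r^4 := by nlinarith
  have hy4 : y^4 ≤ r^4 := by nlinarith
  have hxy4 : x^2*y^2 ≤ r^4 := by nlinarith
  have hr41 : (1:ℝ) ≤ r^4 := one_le_pow₀ h1
  have hr24 : r^2 ≤ r^4 := by nlinarith
  have hxy0 : (0:ℝ) ≤ x^2*y^2 := by positivity
  have hid : Py s x y * (x^2+y^2) - 6*y*Qp s x y
      = y * (-(6*y^4) - 60*x^2*y^2 + 18*x^4 - 36*y^2 - 36*x^2 - 54*s^2)
        + s * (108*(x*y) + 72*(x*y)*y^2 - 72*(x*y)*x^2) := by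
    unfold Py Qp; ring
  rw [hid]
  have hA : |(-(6*y^4) - 60*x^2*y^2 + 18*x^4 - 36*y^2 - 36*x^2 - 54*s^2 : ℝ)| ≤ 210*(1+s^2)*r^4 := by
    have := Abound (s := s) (show r = Real.sqrt (y^2+x^2) by rw [hr]; ring_nf) h1
    calc |(-(6*y^4) - 60*x^2*y^2 + 18*x^4 - 36*y^2 - 36*x^2 - 54*s^2 : ℝ)|
        = |(-(6*y^4) - 60*y^2*x^2 + 18*x^4 - 36*y^2 - 36*x^2 - 54*s^2 : ℝ)| := by ring_nf
      _ ≤ 210*(1+s^2)*r^4 := this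
  refine Gbound_core hr h1 _ _ hA ?_ y hyr
  have hxyr : |x*y| ≤ r^2 := by
    rw [abs_mul]
    calc |x| * |y| ≤ r * r := mul_le_mul hxr hyr (abs_nonneg _) (le_trans zero_le_one h1)
      _ = r^2 := by ring
  have h108 : |(108 + 72*y^2 - 72*x^2 : ℝ)| ≤ 252*r^2 := by
    rw [abs_le]; constructor <;> nlinarith
  calc |(108*(x*y) + 72*(x*y)*y^2 - 72*(x*y)*x^2 : ℝ)| = |x*y| * |(108 + 72*y^2 - 72*x^2 : ℝ)| := by
        rw [← abs_mul]; ring_nf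
    _ ≤ r^2 * (252*r^2) := mul_le_mul hxyr h108 (abs_nonneg _) hr20
    _ = 252*r^4 := by ring

end bounds



lemma main_term (R : ℝ) (hR : 0 < R) :
    ∫ y in (-R)..R, 6*R/(R^2+y^2) = 3*π := by
  have h1 : ∀ y : ℝ, 6*R/(R^2+y^2) = (6/R) * (fun u : ℝ => ((1:ℝ) + u^2)⁻¹) (y/R) := by
    intro y
    field_simp
  rw [intervalIntegral.integral_congr (g := fun y => (6/R) * (fun u : ℝ => ((1:ℝ)+u^2)⁻¹) (y/R))
    (fun y _ => h1 y)]
  rw [intervalIntegral.integral_const_mul]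
  rw [intervalIntegral.integral_comp_div (f := fun u : ℝ => ((1:ℝ)+u^2)⁻¹) hR.ne']
  have : ((-R)/R : ℝ) = -1 := by field_simp
  rw [this, div_self hR.ne']
  rw [smul_eq_mul, integral_inv_one_add_sq]
  rw [arctan_one, arctan_neg, arctan_one]
  field_simp
  ring

lemma edge_abstract (f : ℝ → ℝ → ℝ) (c M : ℝ) (hM : 1 ≤ M) (hc : 0 ≤ c)
    (hcont : ∀ R : ℝ, 0 < R → Continuous (fun y => f R y))
    (hbound : ∀ R y : ℝ, M ≤ R → |f R y - 6*R/(R^2+y^2)| ≤ c/(R*(R^2+y^2))) :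
    Tendsto (fun R => ∫ y in (-R)..R, f R y) atTop (𝓝 (3*π)) := by
  have key : ∀ R : ℝ, M ≤ R → |(∫ y in (-R)..R, f R y) - 3*π| ≤ c*π/(2*R^2) := by
    intro R hMR
    have hR : 0 < R := lt_of_lt_of_le (by linarith) hMR
    have hden : ∀ y : ℝ, (0:ℝ) < R^2 + y^2 := fun y => by positivity
    have hcf : Continuous (fun y => f R y) := hcont R hR
    have hcg : Continuous (fun y : ℝ => 6*R/(R^2+y^2)) :=
      continuous_const.div (by fun_prop) (fun y => (hden y).ne')
    have hif : IntervalIntegrable (fun y => f R y) volume (-R) R := hcf.intervalIntegrable _ _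
    have hig : IntervalIntegrable (fun y : ℝ => 6*R/(R^2+y^2)) volume (-R) R :=
      hcg.intervalIntegrable _ _
    have hsub : IntervalIntegrable (fun y => |f R y - 6*R/(R^2+y^2)|) volume (-R) R :=
      ((hcf.sub hcg).abs).intervalIntegrable _ _
    have hbnd : IntervalIntegrable (fun y : ℝ => c/(R*(R^2+y^2))) volume (-R) R :=
      (continuous_const.div (by fun_prop) (fun y => by positivity)).intervalIntegrable _ _
    have e1 : (∫ y in (-R)..R, f R y) - 3*π = ∫ y in (-R)..R, (f R y - 6*R/(R^2+y^2)) := by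
      rw [intervalIntegral.integral_sub hif hig, main_term R hR]
    rw [e1]
    have hRR : -R ≤ R := by linarith
    calc |∫ y in (-R)..R, (f R y - 6*R/(R^2+y^2))|
        ≤ ∫ y in (-R)..R, |f R y - 6*R/(R^2+y^2)| :=
          intervalIntegral.abs_integral_le_integral_abs hRR
      _ ≤ ∫ y in (-R)..R, c/(R*(R^2+y^2)) := by
          apply intervalIntegral.integral_mono_on hRR hsub hbnd
          intro y _
          exact hbound R y hMR
      _ = (c/R) * ∫ y in (-R)..R, 1/(R^2+y^2) := by
          rw [← intervalIntegral.integral_const_mul]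
          apply intervalIntegral.integral_congr
          intro y _
          field_simp
      _ = c*π/(2*R^2) := by
          have : ∫ y in (-R)..R, 1/(R^2+y^2) = (1/(6*R)) * (3*π) := by
            rw [← main_term R hR, ← intervalIntegral.integral_const_mul]
            apply intervalIntegral.integral_congr
            intro y _
            have := (hden y).ne'
            field_simp
          rw [this]
          field_simp
          ring
  have hlim : Tendsto (fun R : ℝ => c*π/(2*R^2)) atTop (𝓝 0) := by
    apply Tendsto.div_atTop tendsto_const_nhds
    exact (tendsto_pow_atTop (by norm_num : (2:ℕ) ≠ 0)).const_mul_atTop (by norm_num : (0:ℝ) < 2)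
  have h0 : Tendsto (fun R => (∫ y in (-R)..R, f R y) - 3*π) atTop (𝓝 0) := by
    apply squeeze_zero_norm' ?_ hlim
    filter_upwards [eventually_ge_atTop M] with R hR
    simpa [Real.norm_eq_abs] using key R hR
  have := h0.add_const (3*π)
  simpa using this

lemma Qp_sos (s x y : ℝ) :
    Qp s x y = (x^3 - 3*x*y^2 - 3*x + 3*s)^2 + (3*x^2*y - y^3 + 3*y)^2 + 9*(x^2-y^2)^2 := by
  unfold Qp; ring

lemma Qp_pos (s x y : ℝ) (hs : s ≠ 0) : 0 < Qp s x y := by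
  rcases lt_or_ge 0 (Qp s x y) with h | h
  · exact h
  · exfalso
    rw [Qp_sos] at h
    have h1 : x^3 - 3*x*y^2 - 3*x + 3*s = 0 := by
      nlinarith [sq_nonneg (x^3 - 3*x*y^2 - 3*x + 3*s), sq_nonneg (3*x^2*y - y^3 + 3*y), sq_nonneg (x^2-y^2)]
    have h2 : 3*x^2*y - y^3 + 3*y = 0 := by
      nlinarith [sq_nonneg (x^3 - 3*x*y^2 - 3*x + 3*s), sq_nonneg (3*x^2*y - y^3 + 3*y), sq_nonneg (x^2-y^2)]
    have h3 : x^2 - y^2 = 0 := by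
      nlinarith [sq_nonneg (x^3 - 3*x*y^2 - 3*x + 3*s), sq_nonneg (3*x^2*y - y^3 + 3*y), sq_nonneg (x^2-y^2)]
    have hy : y = 0 := by nlinarith [sq_nonneg y, sq_nonneg x]
    have hx : x = 0 := by nlinarith
    rw [hx, hy] at h1
    apply hs; nlinarith

lemma Ebound1 (s x y : ℝ) (hs : s ≠ 0) (hbig : 84*(1+s^2) ≤ Real.sqrt (x^2+y^2)) :
    |Px s x y/Qp s x y - 6*x/(x^2+y^2)| ≤ 924*(1+s^2)/(Real.sqrt (x^2+y^2))^3 := by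
  set r := Real.sqrt (x^2+y^2) with hrdef
  have hK1 : (1:ℝ) ≤ 1 + s^2 := by nlinarith [sq_nonneg s]
  have h1 : (1:ℝ) ≤ r := le_trans (by nlinarith) hbig
  have hr0 : (0:ℝ) < r := lt_of_lt_of_le zero_lt_one h1
  have hr2 : r^2 = x^2 + y^2 := Real.sq_sqrt (by positivity)
  have hρ : (0:ℝ) < x^2 + y^2 := by rw [← hr2]; positivity
  have hQ : 0 < Qp s x y := Qp_pos s x y hs
  have hlow : (1/2)*r^6 ≤ Qp s x y := Qp_lower hrdef hbig
  have hdiff : Px s x y/Qp s x y - 6*x/(x^2+y^2)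
      = (Px s x y * (x^2+y^2) - 6*x*Qp s x y)/(Qp s x y * (x^2+y^2)) := by
    field_simp
  rw [hdiff, abs_div, abs_of_pos (by positivity : (0:ℝ) < Qp s x y * (x^2+y^2))]
  calc |Px s x y * (x^2+y^2) - 6*x*Qp s x y| / (Qp s x y * (x^2+y^2))
      ≤ (462*(1+s^2)*r^5) / ((1/2)*r^6 * r^2) := by
        apply div_le_div₀ (by positivity) (G1bound hrdef h1) (by positivity)
        rw [hr2]
        apply mul_le_mul_of_nonneg_right hlow hρ.le
    _ = 924*(1+s^2)/r^3 := by
        field_simp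
        ring

lemma Ebound2 (s x y : ℝ) (hs : s ≠ 0) (hbig : 84*(1+s^2) ≤ Real.sqrt (x^2+y^2)) :
    |Py s x y/Qp s x y - 6*y/(x^2+y^2)| ≤ 924*(1+s^2)/(Real.sqrt (x^2+y^2))^3 := by
  set r := Real.sqrt (x^2+y^2) with hrdef
  have hK1 : (1:ℝ) ≤ 1 + s^2 := by nlinarith [sq_nonneg s]
  have h1 : (1:ℝ) ≤ r := le_trans (by nlinarith) hbig
  have hr0 : (0:ℝ) < r := lt_of_lt_of_le zero_lt_one h1
  have hr2 : r^2 = x^2 + y^2 := Real.sq_sqrt (by positivity)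
  have hρ : (0:ℝ) < x^2 + y^2 := by rw [← hr2]; positivity
  have hQ : 0 < Qp s x y := Qp_pos s x y hs
  have hlow : (1/2)*r^6 ≤ Qp s x y := Qp_lower hrdef hbig
  have hdiff : Py s x y/Qp s x y - 6*y/(x^2+y^2)
      = (Py s x y * (x^2+y^2) - 6*y*Qp s x y)/(Qp s x y * (x^2+y^2)) := by
    field_simp
  rw [hdiff, abs_div, abs_of_pos (by positivity : (0:ℝ) < Qp s x y * (x^2+y^2))]
  calc |Py s x y * (x^2+y^2) - 6*y*Qp s x y| / (Qp s x y * (x^2+y^2))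
      ≤ (462*(1+s^2)*r^5) / ((1/2)*r^6 * r^2) := by
        apply div_le_div₀ (by positivity) (G2bound hrdef h1) (by positivity)
        rw [hr2]
        apply mul_le_mul_of_nonneg_right hlow hρ.le
    _ = 924*(1+s^2)/r^3 := by
        field_simp
        ring

lemma denom_le (R u : ℝ) (hR : 0 < R) (hRr : R ≤ Real.sqrt (R^2+u^2))
    (hr2 : (Real.sqrt (R^2+u^2))^2 = R^2+u^2) :
    R*(R^2+u^2) ≤ (Real.sqrt (R^2+u^2))^3 := by
  have h : (Real.sqrt (R^2+u^2))^3 = Real.sqrt (R^2+u^2) * (R^2+u^2) := by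
    rw [pow_succ, mul_comm, hr2, mul_comm]
  rw [h]
  apply mul_le_mul_of_nonneg_right hRr (by positivity)

lemma edge_right (s : ℝ) (hs : s ≠ 0) :
    Tendsto (fun R => ∫ y in (-R)..R, Px s R y / Qp s R y) atTop (𝓝 (3*π)) := by
  apply edge_abstract _ (924*(1+s^2)) (84*(1+s^2)) (by nlinarith [sq_nonneg s]) (by positivity)
  · intro R _
    exact (by unfold Px; fun_prop : Continuous fun y => Px s R y).div
      (by unfold Qp; fun_prop) (fun y => (Qp_pos s R y hs).ne')
  · intro R y hMR
    have hR : 0 < R := lt_of_lt_of_le (by positivity) hMR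
    have hr2 : (Real.sqrt (R^2+y^2))^2 = R^2+y^2 := Real.sq_sqrt (by positivity)
    have hRr : R ≤ Real.sqrt (R^2+y^2) := by
      have h := Real.sqrt_le_sqrt (by nlinarith [sq_nonneg y] : R^2 ≤ R^2+y^2)
      rwa [Real.sqrt_sq hR.le] at h
    have h1 := Ebound1 s R y hs (le_trans hMR hRr)
    refine le_trans h1 ?_
    apply div_le_div_of_nonneg_left (by positivity) (by positivity)
      (denom_le R y hR hRr hr2)

lemma edge_top (s : ℝ) (hs : s ≠ 0) :
    Tendsto (fun R => ∫ x in (-R)..R, Py s x R / Qp s x R) atTop (𝓝 (3*π)) := by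
  apply edge_abstract _ (924*(1+s^2)) (84*(1+s^2)) (by nlinarith [sq_nonneg s]) (by positivity)
  · intro R _
    exact (by unfold Py; fun_prop : Continuous fun x => Py s x R).div
      (by unfold Qp; fun_prop) (fun x => (Qp_pos s x R hs).ne')
  · intro R x hMR
    have hR : 0 < R := lt_of_lt_of_le (by positivity) hMR
    have hxR2 : x^2 + R^2 = R^2 + x^2 := by ring
    have hr2 : (Real.sqrt (x^2+R^2))^2 = x^2+R^2 := Real.sq_sqrt (by positivity)
    have hRr : R ≤ Real.sqrt (x^2+R^2) := by
      have h := Real.sqrt_le_sqrt (by nlinarith [sq_nonneg x] : R^2 ≤ x^2+R^2)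
      rwa [Real.sqrt_sq hR.le] at h
    have h1 := Ebound2 s x R hs (le_trans hMR hRr)
    rw [show (R:ℝ)^2 + x^2 = x^2 + R^2 by ring]
    refine le_trans h1 ?_
    apply div_le_div_of_nonneg_left (by positivity) (by positivity)
    have h3 : (Real.sqrt (x^2+R^2))^3 = Real.sqrt (x^2+R^2) * (x^2+R^2) := by
      rw [pow_succ, mul_comm, hr2, mul_comm]
    rw [h3]
    apply mul_le_mul_of_nonneg_right hRr (by positivity)

def Pxx (s x y : ℝ) : ℝ := 6*(x^2+y^2)^2 + 24*x^2*(x^2+y^2) + 36*x^2 + 36*y^2 + 18 + 36*x*s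
def Pxy (s x y : ℝ) : ℝ := 24*x*y*(x^2+y^2) + 72*x*y - 36*y*s
def Pyy (s x y : ℝ) : ℝ := 6*(x^2+y^2)^2 + 24*y^2*(x^2+y^2) + 36*y^2 + 36*x^2 + 18 - 36*x*s

noncomputable def V (s x y : ℝ) : ℝ :=
  -(3 * ((x^2 + y^2 + 3) * (x^2 - y^2) - 6*x*s)) / Qp s x y

noncomputable def L (a b : ℝ) : ℝ × ℝ →L[ℝ] ℝ :=
  a • (ContinuousLinearMap.fst ℝ ℝ ℝ) + b • (ContinuousLinearMap.snd ℝ ℝ ℝ)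

@[simp] lemma L_app (a b : ℝ) (v : ℝ × ℝ) : L a b v = a * v.1 + b * v.2 := by
  simp [L, mul_comm]

lemma HasFDerivAt.npow {f : ℝ × ℝ → ℝ} {f' : ℝ × ℝ →L[ℝ] ℝ} {p : ℝ × ℝ} (n : ℕ)
    (hf : HasFDerivAt f f' p) :
    HasFDerivAt (fun q => f q ^ n) ((n * f p ^ (n - 1)) • f') p :=
  (hasDerivAt_pow n (f p)).comp_hasFDerivAt p hf

section grad
variable (s x y : ℝ)

lemma hasFDerivAt_Qp :
    HasFDerivAt (fun p : ℝ × ℝ => Qp s p.1 p.2) (L (Px s x y) (Py s x y)) (x, y) := by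
  have hx : HasFDerivAt (fun p : ℝ × ℝ => p.1) (ContinuousLinearMap.fst ℝ ℝ ℝ) (x, y) :=
    hasFDerivAt_fst
  have hy : HasFDerivAt (fun p : ℝ × ℝ => p.2) (ContinuousLinearMap.snd ℝ ℝ ℝ) (x, y) :=
    hasFDerivAt_snd
  have h := (((((hx.npow 2).add (hy.npow 2)).npow 3).add
      (((hx.npow 4).add (hy.npow 4)).const_mul 3)).add
      ((((hx.npow 2).const_mul 18).mul (hy.npow 2)))).add
      ((((hx.npow 2).add (hy.npow 2)).const_mul 9))
  have h2 := (h.add_const (9*s^2)).add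
      (((((hx.npow 3).const_mul 6).sub ((hx.const_mul 18).mul (hy.npow 2))).sub
        (hx.const_mul 18)).mul_const s)
  show HasFDerivAt (fun p : ℝ × ℝ => (p.1^2 + p.2^2)^3 + 3*(p.1^4 + p.2^4) + 18*p.1^2*p.2^2
      + 9*(p.1^2 + p.2^2) + 9*s^2 + (6*p.1^3 - 18*p.1*p.2^2 - 18*p.1)*s)
      (L (Px s x y) (Py s x y)) (x, y)
  refine h2.congr_fderiv ?_
  unfold Px Py
  ext <;> simp <;> ring

lemma hasFDerivAt_Px :
    HasFDerivAt (fun p : ℝ × ℝ => Px s p.1 p.2) (L (Pxx s x y) (Pxy s x y)) (x, y) := by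
  have hx : HasFDerivAt (fun p : ℝ × ℝ => p.1) (ContinuousLinearMap.fst ℝ ℝ ℝ) (x, y) :=
    hasFDerivAt_fst
  have hy : HasFDerivAt (fun p : ℝ × ℝ => p.2) (ContinuousLinearMap.snd ℝ ℝ ℝ) (x, y) :=
    hasFDerivAt_snd
  have h := (((((hx.const_mul 6).mul (((hx.npow 2).add (hy.npow 2)).npow 2)).add
      ((hx.npow 3).const_mul 12)).add
      ((hx.const_mul 36).mul (hy.npow 2))).add
      (hx.const_mul 18)).add
      (((((hx.npow 2).const_mul 18).sub ((hy.npow 2).const_mul 18)).sub_const 18).mul_const s)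
  show HasFDerivAt (fun p : ℝ × ℝ => 6*p.1*(p.1^2+p.2^2)^2 + 12*p.1^3 + 36*p.1*p.2^2 + 18*p.1
      + (18*p.1^2-18*p.2^2-18)*s) (L (Pxx s x y) (Pxy s x y)) (x, y)
  refine h.congr_fderiv ?_
  unfold Pxx Pxy
  ext <;> simp <;> ring

lemma hasFDerivAt_Py :
    HasFDerivAt (fun p : ℝ × ℝ => Py s p.1 p.2) (L (Pxy s x y) (Pyy s x y)) (x, y) := by
  have hx : HasFDerivAt (fun p : ℝ × ℝ => p.1) (ContinuousLinearMap.fst ℝ ℝ ℝ) (x, y) :=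
    hasFDerivAt_fst
  have hy : HasFDerivAt (fun p : ℝ × ℝ => p.2) (ContinuousLinearMap.snd ℝ ℝ ℝ) (x, y) :=
    hasFDerivAt_snd
  have h := (((((hy.const_mul 6).mul (((hx.npow 2).add (hy.npow 2)).npow 2)).add
      ((hy.npow 3).const_mul 12)).add
      (((hx.npow 2).const_mul 36).mul hy)).add
      (hy.const_mul 18)).sub
      ((((hx.const_mul 36).mul hy)).mul_const s)
  show HasFDerivAt (fun p : ℝ × ℝ => 6*p.2*(p.1^2+p.2^2)^2 + 12*p.2^3 + 36*p.1^2*p.2 + 18*p.2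
      - 36*p.1*p.2*s) (L (Pxy s x y) (Pyy s x y)) (x, y)
  refine h.congr_fderiv ?_
  unfold Pxy Pyy
  ext <;> simp <;> ring

end grad

noncomputable def F1 (s : ℝ) (p : ℝ × ℝ) : ℝ := Px s p.1 p.2 / Qp s p.1 p.2
noncomputable def F2 (s : ℝ) (p : ℝ × ℝ) : ℝ := Py s p.1 p.2 / Qp s p.1 p.2
noncomputable def D1 (s x y : ℝ) : ℝ :=
  (Pxx s x y * Qp s x y - Px s x y ^ 2) / Qp s x y ^ 2
noncomputable def D2 (s x y : ℝ) : ℝ :=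
  (Pxy s x y * Qp s x y - Px s x y * Py s x y) / Qp s x y ^ 2
noncomputable def D3 (s x y : ℝ) : ℝ :=
  (Pyy s x y * Qp s x y - Py s x y ^ 2) / Qp s x y ^ 2

lemma hasFDerivAt_F1 (s x y : ℝ) (hs : s ≠ 0) :
    HasFDerivAt (F1 s) (L (D1 s x y) (D2 s x y)) (x, y) := by
  have hQ : Qp s x y ≠ 0 := (Qp_pos s x y hs).ne'
  have hinv : HasFDerivAt (fun p : ℝ × ℝ => (Qp s p.1 p.2)⁻¹)
      ((-(Qp s x y ^ 2)⁻¹) • L (Px s x y) (Py s x y)) (x, y) :=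
    (hasDerivAt_inv hQ).comp_hasFDerivAt (x, y) (hasFDerivAt_Qp s x y)
  have h := (hasFDerivAt_Px s x y).mul hinv
  show HasFDerivAt (fun p : ℝ × ℝ => Px s p.1 p.2 / Qp s p.1 p.2) _ (x, y)
  simp only [div_eq_mul_inv]
  refine h.congr_fderiv ?_
  unfold D1 D2
  ext <;> simp <;> field_simp <;> ring

lemma hasFDerivAt_F2 (s x y : ℝ) (hs : s ≠ 0) :
    HasFDerivAt (F2 s) (L (D2 s x y) (D3 s x y)) (x, y) := by
  have hQ : Qp s x y ≠ 0 := (Qp_pos s x y hs).ne'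
  have hinv : HasFDerivAt (fun p : ℝ × ℝ => (Qp s p.1 p.2)⁻¹)
      ((-(Qp s x y ^ 2)⁻¹) • L (Px s x y) (Py s x y)) (x, y) :=
    (hasDerivAt_inv hQ).comp_hasFDerivAt (x, y) (hasFDerivAt_Qp s x y)
  have h := (hasFDerivAt_Py s x y).mul hinv
  show HasFDerivAt (fun p : ℝ × ℝ => Py s p.1 p.2 / Qp s p.1 p.2) _ (x, y)
  simp only [div_eq_mul_inv]
  refine h.congr_fderiv ?_
  unfold D2 D3
  ext <;> simp <;> field_simp <;> ring

lemma key_id (s x y : ℝ) :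
    36 * ((x^2 + y^2 + 3) * (x^2 - y^2) - 6*x*s)^2
      = Qp s x y * (Pxx s x y + Pyy s x y) - Px s x y^2 - Py s x y^2 := by
  unfold Qp Px Py Pxx Pyy; ring

lemma div_identity (s x y : ℝ) (hs : s ≠ 0) :
    D1 s x y + D3 s x y = 4 * V s x y ^ 2 := by
  have hQ : Qp s x y ≠ 0 := (Qp_pos s x y hs).ne'
  unfold D1 D3 V
  rw [← add_div, div_pow]
  rw [show Pxx s x y * Qp s x y - Px s x y ^ 2 + (Pyy s x y * Qp s x y - Py s x y ^ 2)
      = 36 * ((x^2 + y^2 + 3) * (x^2 - y^2) - 6*x*s)^2 from by linear_combination -(key_id s x y)]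
  rw [mul_div_assoc']
  congr 1
  ring

lemma square_eq (s : ℝ) (hs : s ≠ 0) (R : ℝ) (hR : 0 < R) :
    4 * ∫ p in Icc (-R) R ×ˢ Icc (-R) R, V s p.1 p.2 ^ 2
      = (((∫ x in (-R)..R, F2 s (x, R)) - ∫ x in (-R)..R, F2 s (x, -R))
          + ∫ y in (-R)..R, F1 s (R, y)) - ∫ y in (-R)..R, F1 s (-R, y) := by
  have hab : (-R : ℝ) ≤ R := by linarith
  have hQc : Continuous (fun p : ℝ × ℝ => Qp s p.1 p.2) := by unfold Qp; fun_prop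
  have hQne : ∀ p : ℝ × ℝ, Qp s p.1 p.2 ≠ 0 := fun p => (Qp_pos s p.1 p.2 hs).ne'
  have hF1c : Continuous (F1 s) :=
    (by unfold Px; fun_prop : Continuous fun p : ℝ × ℝ => Px s p.1 p.2).div hQc hQne
  have hF2c : Continuous (F2 s) :=
    (by unfold Py; fun_prop : Continuous fun p : ℝ × ℝ => Py s p.1 p.2).div hQc hQne
  have hVc : Continuous (fun p : ℝ × ℝ => V s p.1 p.2) := by
    unfold V
    exact (by fun_prop : Continuous fun p : ℝ × ℝ =>
      -(3 * ((p.1^2 + p.2^2 + 3) * (p.1^2 - p.2^2) - 6*p.1*s))).div hQc hQne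
  have h4Vc : Continuous (fun p : ℝ × ℝ => 4 * V s p.1 p.2 ^ 2) :=
    continuous_const.mul (hVc.pow 2)
  set f' : ℝ × ℝ → (ℝ × ℝ →L[ℝ] ℝ) := fun p => L (D1 s p.1 p.2) (D2 s p.1 p.2) with hf'
  set g' : ℝ × ℝ → (ℝ × ℝ →L[ℝ] ℝ) := fun p => L (D2 s p.1 p.2) (D3 s p.1 p.2) with hg'
  have hfun : (fun p : ℝ × ℝ => f' p (1, 0) + g' p (0, 1)) = fun p => 4 * V s p.1 p.2 ^ 2 := by
    funext p
    simp only [hf', hg', L_app]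
    rw [show D1 s p.1 p.2 * (1:ℝ) + D2 s p.1 p.2 * (0:ℝ)
        + (D2 s p.1 p.2 * (0:ℝ) + D3 s p.1 p.2 * (1:ℝ)) = D1 s p.1 p.2 + D3 s p.1 p.2 by ring]
    exact div_identity s p.1 p.2 hs
  have Hi : IntegrableOn (fun p : ℝ × ℝ => f' p (1, 0) + g' p (0, 1))
      (Set.uIcc (-R) R ×ˢ Set.uIcc (-R) R) := by
    rw [hfun]
    exact h4Vc.continuousOn.integrableOn_compact (isCompact_uIcc.prod isCompact_uIcc)
  have hdiv := MeasureTheory.integral2_divergence_prod_of_hasFDerivAt_off_countable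
    (F1 s) (F2 s) f' g' (-R) (-R) R R ∅ Set.countable_empty
    hF1c.continuousOn hF2c.continuousOn
    (fun p _ => hasFDerivAt_F1 s p.1 p.2 hs)
    (fun p _ => hasFDerivAt_F2 s p.1 p.2 hs) Hi
  have hIcc : IntegrableOn (fun p : ℝ × ℝ => 4 * V s p.1 p.2 ^ 2)
      (Icc (-R) R ×ˢ Icc (-R) R) :=
    h4Vc.continuousOn.integrableOn_compact (isCompact_Icc.prod isCompact_Icc)
  have hinner : ∀ x : ℝ, (∫ y in (-R)..R, 4 * V s x y ^ 2)
      = ∫ y in Icc (-R) R, 4 * V s x y ^ 2 := by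
    intro x
    rw [intervalIntegral.integral_of_le hab, setIntegral_congr_set Ioc_ae_eq_Icc]
  have e2 : (∫ x in (-R)..R, ∫ y in (-R)..R, f' (x, y) (1, 0) + g' (x, y) (0, 1))
      = 4 * ∫ p in Icc (-R) R ×ˢ Icc (-R) R, V s p.1 p.2 ^ 2 := by
    calc (∫ x in (-R)..R, ∫ y in (-R)..R, f' (x, y) (1, 0) + g' (x, y) (0, 1))
        = ∫ x in (-R)..R, ∫ y in (-R)..R, 4 * V s x y ^ 2 := by
          apply intervalIntegral.integral_congr
          intro a _
          apply intervalIntegral.integral_congr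
          intro b _
          exact congrFun hfun (a, b)
      _ = ∫ x in Icc (-R) R, ∫ y in Icc (-R) R, 4 * V s x y ^ 2 := by
          rw [intervalIntegral.integral_of_le hab, setIntegral_congr_set Ioc_ae_eq_Icc]
          simp only [hinner]
      _ = ∫ p in Icc (-R) R ×ˢ Icc (-R) R, 4 * V s p.1 p.2 ^ 2 :=
          (MeasureTheory.setIntegral_prod _ hIcc).symm
      _ = 4 * ∫ p in Icc (-R) R ×ˢ Icc (-R) R, V s p.1 p.2 ^ 2 :=
          MeasureTheory.integral_const_mul 4 _
  rw [e2] at hdiv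
  exact hdiv

lemma Py_negy (s x y : ℝ) : Py s x (-y) = -(Py s x y) := by unfold Py; ring
lemma Qp_negy (s x y : ℝ) : Qp s x (-y) = Qp s x y := by unfold Qp; ring
lemma Px_negx (s x y : ℝ) : Px s (-x) y = -(Px (-s) x y) := by unfold Px; ring
lemma Qp_negx (s x y : ℝ) : Qp s (-x) y = Qp (-s) x y := by unfold Qp; ring

lemma flux_tendsto (s : ℝ) (hs : s ≠ 0) :
    Tendsto (fun R => (((∫ x in (-R)..R, F2 s (x, R)) - ∫ x in (-R)..R, F2 s (x, -R))
        + ∫ y in (-R)..R, F1 s (R, y)) - ∫ y in (-R)..R, F1 s (-R, y)) atTop (𝓝 (12*π)) := by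
  have h2 : ∀ R : ℝ, (∫ x in (-R)..R, F2 s (x, -R)) = -∫ x in (-R)..R, Py s x R/Qp s x R := by
    intro R
    rw [← intervalIntegral.integral_neg]
    apply intervalIntegral.integral_congr
    intro a _
    show Py s a (-R)/Qp s a (-R) = -(Py s a R/Qp s a R)
    rw [Py_negy, Qp_negy, neg_div]
  have h3 : ∀ R : ℝ, (∫ y in (-R)..R, F1 s (-R, y)) = -∫ y in (-R)..R, Px (-s) R y/Qp (-s) R y := by
    intro R
    rw [← intervalIntegral.integral_neg]
    apply intervalIntegral.integral_congr
    intro a _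
    show Px s (-R) a/Qp s (-R) a = -(Px (-s) R a/Qp (-s) R a)
    rw [Px_negx, Qp_negx, neg_div]
  have hT := edge_top s hs
  have hE := edge_right s hs
  have hE' := edge_right (-s) (neg_ne_zero.mpr hs)
  have hsum := ((hT.add hT).add hE).add hE'
  rw [show 3*π + 3*π + 3*π + 3*π = 12*π by ring] at hsum
  apply hsum.congr
  intro R
  rw [h2 R, h3 R]
  show _ = ((∫ x in (-R)..R, Py s x R/Qp s x R) - -(∫ x in (-R)..R, Py s x R/Qp s x R)
    + ∫ y in (-R)..R, Px s R y/Qp s R y) - -(∫ y in (-R)..R, Px (-s) R y/Qp (-s) R y)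
  ring

lemma V_integral (s : ℝ) (hs : s ≠ 0) :
    Integrable (fun p : ℝ × ℝ => V s p.1 p.2 ^ 2) (volume : Measure (ℝ × ℝ)) ∧
    ∫ p : ℝ × ℝ, V s p.1 p.2 ^ 2 = 3 * π := by
  have hQc : Continuous (fun p : ℝ × ℝ => Qp s p.1 p.2) := by unfold Qp; fun_prop
  have hQne : ∀ p : ℝ × ℝ, Qp s p.1 p.2 ≠ 0 := fun p => (Qp_pos s p.1 p.2 hs).ne'
  have hVc : Continuous (fun p : ℝ × ℝ => V s p.1 p.2 ^ 2) := by
    unfold V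
    exact ((by fun_prop : Continuous fun p : ℝ × ℝ =>
      -(3 * ((p.1^2 + p.2^2 + 3) * (p.1^2 - p.2^2) - 6*p.1*s))).div hQc hQne).pow 2
  have hcov : AECover (volume : Measure (ℝ × ℝ)) atTop
      (fun R : ℝ => Icc (-R) R ×ˢ Icc (-R) R) := by
    constructor
    · apply MeasureTheory.ae_of_all
      intro p
      filter_upwards [eventually_ge_atTop (max |p.1| |p.2|)] with R hR
      constructor
      · constructor
        · have : |p.1| ≤ R := le_trans (le_max_left _ _) hR
          linarith [abs_le.mp this |>.1]
        · exact le_trans (le_trans (le_abs_self _) (le_max_left _ _)) hR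
      · constructor
        · have : |p.2| ≤ R := le_trans (le_max_right _ _) hR
          linarith [abs_le.mp this |>.1]
        · exact le_trans (le_trans (le_abs_self _) (le_max_right _ _)) hR
    · exact fun R => measurableSet_Icc.prod measurableSet_Icc
  have hfi : ∀ R : ℝ, IntegrableOn (fun p : ℝ × ℝ => V s p.1 p.2 ^ 2)
      (Icc (-R) R ×ˢ Icc (-R) R) := fun R =>
    hVc.continuousOn.integrableOn_compact (isCompact_Icc.prod isCompact_Icc)
  have htend : Tendsto (fun R : ℝ => ∫ p in Icc (-R) R ×ˢ Icc (-R) R, V s p.1 p.2 ^ 2)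
      atTop (𝓝 (3*π)) := by
    have h4 : Tendsto (fun R : ℝ =>
        4 * ∫ p in Icc (-R) R ×ˢ Icc (-R) R, V s p.1 p.2 ^ 2) atTop (𝓝 (12*π)) := by
      apply (flux_tendsto s hs).congr'
      filter_upwards [eventually_gt_atTop (0:ℝ)] with R hR
      exact (square_eq s hs R hR).symm
    have h5 := h4.const_mul (1/4 : ℝ)
    rw [show (1/4 : ℝ) * (12*π) = 3*π by ring] at h5
    apply h5.congr
    intro R
    ring
  have hnn : (0 : ℝ × ℝ → ℝ) ≤ᵐ[volume] fun p => V s p.1 p.2 ^ 2 :=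
    MeasureTheory.ae_of_all _ fun p => sq_nonneg _
  have hint : Integrable (fun p : ℝ × ℝ => V s p.1 p.2 ^ 2) :=
    hcov.integrable_of_integral_tendsto_of_nonneg_ae (3*π) hfi hnn htend
  exact ⟨hint, hcov.integral_eq_of_tendsto (3*π) hint htend⟩

theorem U_sq_integral_regular_time (C : ℝ) (t : ℝ) (ht : t ≠ C) :
    Integrable (fun p : ℝ × ℝ => (U C p.1 p.2 t)^2) (volume : Measure (ℝ × ℝ)) ∧
    ∫ p : ℝ × ℝ, (U C p.1 p.2 t)^2 = 3 * π := by
  have hs : C - t ≠ 0 := sub_ne_zero_of_ne (Ne.symm ht)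
  have h := V_integral (C - t) hs
  have hUV : (fun p : ℝ × ℝ => (U C p.1 p.2 t)^2) = fun p : ℝ × ℝ => V (C - t) p.1 p.2 ^ 2 := rfl
  rw [hUV]
  exact h
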